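/- arXiv:2209.12345 — 3 statements merged into one kernel-verified Lean document; each statement's English description precedes it below -/
import Mathlib

section
/- Let N ≥ 2 and H ≥ 1, let π be a uniformly random permutation of {1,…,N}, let M_1,…,M_H be fixed real N×N matrices, and set Γ_h = ∑_{i=1}^N M_h(i,π(i)) and Γ = (Γ_1,…,Γ_H). Assume the covariance matrix V = Cov(Γ) is positive definite and let Ṽ = V^{-1/2} (the inverse of the positive-definite square root of V). Define M'_h(i,j) = M_h(i,j) − N^{-1} ∑_{j'=1}^N M_h(i,j') − N^{-1} ∑_{i'=1}^N M_h(i',j) + N^{-2} ∑_{i',j'=1}^N M_h(i',j'), and M''_h = ∑_{l=1}^H Ṽ_{hl} M'_l. Then: (i) every row sum and every column sum of each M''_h equals zero, Tr((M''_h)ᵀ M''_h) = N−1 for every h, Tr((M''_h)ᵀ M''_l) = 0 for h ≠ l, and V^{-1/2}(Γ − E[Γ]) = (∑_{i=1}^N M''_1(i,π(i)), …, ∑_{i=1}^N M''_H(i,π(i)))ᵀ; (ii) max_{h,i,j} |M''_h(i,j)| ≤ λ_min(V)^{-1/2} · √H · max_{h,i,j} |M'_h(i,j)|, where λ_min(V)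 denotes the smallest eigenvalue of V. -/
open Finset Matrix
open scoped Classical MatrixOrder

noncomputable section

/-- Expectation with respect to the uniform distribution on the symmetric group of
permutations of `{1,…,N}`. -/
def pexp {N : ℕ} (f : Equiv.Perm (Fin N) → ℝ) : ℝ :=
  (∑ π : Equiv.Perm (Fin N), f π) / (Nat.factorial N : ℝ)

/-- Smallest eigenvalue of a (symmetric) matrix, via the Rayleigh quotient. -/
def lamMin {n : Type*} [Fintype n] (A : Matrix n n ℝ) : ℝ :=
  ⨅ x : {x : n → ℝ // (∑ i, x i ^ 2) = 1}, x.1 ⬝ᵥ A.mulVec x.1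

/-!
Right translations `π ↦ π * σ` preserve the uniform measure on permutations. Taking `σ` a
transposition, `E[g (π i)]` does not depend on `i`, and `E[a (π i) * b (π k)]` does not depend
on `k ≠ i`; summing over `i`, resp. `k`, yields the first two moments of
`Γ_A π = ∑ i, A i (π i)`. Since `M'` is the double centring of `M`, `Γ_M - E Γ_M = Γ_M'`, and
`E[Γ_A Γ_B] = tr (Aᵀ B) / (N - 1)` when `B` has zero row and column sums. So the trace Gram
matrix of `M'_1, …, M'_H` is `(N - 1) V`, and the congruence by the symmetric matrix `V^{-1/2}`
turns it into `(N - 1) I`. For (ii), a row `v` of `V^{-1/2}` satisfies `vᵀ V v = 1`, hence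
`λ_min(V) |v|² ≤ 1`, and Cauchy–Schwarz bounds `|∑ l, v l * M'_l i j|` by `√H |v| max |M'|`.
-/

open Equiv

section PermSums

variable {α : Type*} [Fintype α] [DecidableEq α]

theorem sum_perm_apply_eq {M : Type*} [AddCommMonoid M] (g : α → M) (i i' : α) :
    ∑ π : Perm α, g (π i) = ∑ π : Perm α, g (π i') :=
  Fintype.sum_equiv (Equiv.mulRight (swap i' i)) _ _ fun π => by simp

theorem card_smul_sum_perm_apply {M : Type*} [AddCommMonoid M] (g : α → M) (i : α) :
    Fintype.card α • ∑ π : Perm α, g (π i) = (Fintype.card α).factorial • ∑ j, g j :=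
  calc Fintype.card α • ∑ π : Perm α, g (π i)
      = ∑ i' : α, ∑ π : Perm α, g (π i') := by
        rw [← Finset.card_univ, ← Finset.sum_const]
        exact Finset.sum_congr rfl fun i' _ => sum_perm_apply_eq g i i'
    _ = ∑ π : Perm α, ∑ j, g j :=
        Finset.sum_comm.trans <| Finset.sum_congr rfl fun π _ => Equiv.sum_comp π g
    _ = (Fintype.card α).factorial • ∑ j, g j := by
        rw [Finset.sum_const, Finset.card_univ, Fintype.card_perm]

theorem card_mul_sum_perm_apply {R : Type*} [CommSemiring R] (g : α → R) (i : α) :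
    (Fintype.card α : R) * ∑ π : Perm α, g (π i) = (Fintype.card α).factorial * ∑ j, g j := by
  simpa only [nsmul_eq_mul] using card_smul_sum_perm_apply g i

theorem sum_perm_apply_apply_eq {M : Type*} [AddCommMonoid M] (f : α → α → M) {i k k' : α}
    (hk : k ≠ i) (hk' : k' ≠ i) :
    ∑ π : Perm α, f (π i) (π k) = ∑ π : Perm α, f (π i) (π k') :=
  Fintype.sum_equiv (Equiv.mulRight (swap k' k)) _ _ fun π => by
    simp [swap_apply_of_ne_of_ne hk'.symm hk.symm]

-- `∑ k', ∑ π, a (π i) * b (π k') = 0`, and the terms with `k' ≠ i` are all equal.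
theorem card_sub_one_mul_sum_perm_apply_mul_apply {R : Type*} [CommRing R] (a b : α → R)
    (hb : ∑ j, b j = 0) {i k : α} (hk : k ≠ i) :
    ((Fintype.card α : R) - 1) * ∑ π : Perm α, a (π i) * b (π k)
      = -∑ π : Perm α, a (π i) * b (π i) := by
  set T := fun k' => ∑ π : Perm α, a (π i) * b (π k')
  have hsum : ∑ k', T k' = 0 := by
    simp only [T]
    rw [Finset.sum_comm]
    refine Finset.sum_eq_zero fun π _ => ?_
    rw [← Finset.mul_sum, Equiv.sum_comp π b, hb, mul_zero]
  have herase : ∑ k' ∈ Finset.univ.erase i, T k' = ∑ k' ∈ Finset.univ.erase i, T k :=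
    Finset.sum_congr rfl fun k' hk' =>
      (sum_perm_apply_apply_eq (fun x y => a x * b y) hk (Finset.ne_of_mem_erase hk')).symm
  rw [← Finset.add_sum_erase _ _ (Finset.mem_univ i), herase,
    Finset.sum_erase_eq_sub (Finset.mem_univ i), Finset.sum_const, Finset.card_univ,
    nsmul_eq_mul] at hsum
  linear_combination hsum

theorem card_mul_card_sub_one_mul_sum_perm_mul_sum_perm {R : Type*} [CommRing R]
    (A B : Matrix α α R) (hrow : ∀ i, ∑ j, B i j = 0) (hcol : ∀ j, ∑ i, B i j = 0) :
    (Fintype.card α : R) * (Fintype.card α - 1) *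
        ∑ π : Perm α, (∑ i, A i (π i)) * (∑ k, B k (π k))
      = Fintype.card α * (Fintype.card α).factorial * ∑ i, ∑ j, A i j * B i j := by
  set N := (Fintype.card α : R)
  have hpair : ∀ i k, N * (N - 1) * ∑ π : Perm α, A i (π i) * B k (π k)
      = (Fintype.card α).factorial *
          ((if k = i then N * ∑ j, A i j * B i j else 0) - ∑ j, A i j * B k j) := by
    intro i k
    by_cases hki : k = i
    · subst hki
      have := card_mul_sum_perm_apply (fun j => A k j * B k j) k
      rw [if_pos rfl]
      linear_combination (N - 1) * this
    · have h1 := card_sub_one_mul_sum_perm_apply_mul_apply (A i) (B k) (hrow k) hki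
      have h2 := card_mul_sum_perm_apply (fun j => A i j * B k j) i
      simp only [if_neg hki]
      linear_combination N * h1 - h2
  have hcross : ∀ i, ∑ k, ∑ j, A i j * B k j = 0 := fun i => by
    rw [Finset.sum_comm]
    simp [← Finset.mul_sum, hcol]
  calc N * (N - 1) * ∑ π : Perm α, (∑ i, A i (π i)) * (∑ k, B k (π k))
      = ∑ i, ∑ k, N * (N - 1) * ∑ π : Perm α, A i (π i) * B k (π k) := by
        simp only [Finset.sum_mul_sum]
        simp only [Finset.mul_sum]
        rw [Finset.sum_comm]
        exact Finset.sum_congr rfl fun i _ => Finset.sum_comm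
    _ = ∑ i, (Fintype.card α).factorial *
          (N * ∑ j, A i j * B i j - ∑ k, ∑ j, A i j * B k j) := by
        simp only [hpair, ← Finset.mul_sum, Finset.sum_sub_distrib, Finset.sum_ite_eq',
          Finset.mem_univ, if_true]
    _ = N * (Fintype.card α).factorial * ∑ i, ∑ j, A i j * B i j := by
        simp only [hcross, sub_zero, ← Finset.mul_sum]
        ring

end PermSums

section DoubleCenter

variable {α K : Type*} [Fintype α] [Field K]

def doubleCenter (A : Matrix α α K) : Matrix α α K := Matrix.of fun i j =>
  A i j - (Fintype.card α : K)⁻¹ * ∑ j', A i j' - (Fintype.card α : K)⁻¹ * ∑ i', A i' j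
    + ((Fintype.card α : K) ^ 2)⁻¹ * ∑ i', ∑ j', A i' j'

variable [CharZero K] [Nonempty α] (A : Matrix α α K)

theorem sum_doubleCenter_apply_perm (π : Perm α) :
    ∑ i, doubleCenter A i (π i)
      = ∑ i, A i (π i) - (Fintype.card α : K)⁻¹ * ∑ i, ∑ j, A i j := by
  have hcol : ∑ i, ∑ i', A i' (π i) = ∑ i, ∑ j, A i j := by
    rw [Finset.sum_comm]
    exact Finset.sum_congr rfl fun i' _ => Equiv.sum_comp π (A i')
  have hN : (Fintype.card α : K) ≠ 0 := Nat.cast_ne_zero.mpr Fintype.card_ne_zero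
  simp only [doubleCenter, Matrix.of_apply, Finset.sum_add_distrib, Finset.sum_sub_distrib,
    ← Finset.mul_sum, hcol, Finset.sum_const, Finset.card_univ, nsmul_eq_mul]
  field_simp
  ring

theorem sum_doubleCenter_apply_right (i : α) : ∑ j, doubleCenter A i j = 0 := by
  have hN : (Fintype.card α : K) ≠ 0 := Nat.cast_ne_zero.mpr Fintype.card_ne_zero
  simp only [doubleCenter, Matrix.of_apply, Finset.sum_add_distrib, Finset.sum_sub_distrib,
    ← Finset.mul_sum, Finset.sum_const, Finset.card_univ, nsmul_eq_mul]
  rw [Finset.sum_comm (f := fun j i' => A i' j)]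
  field_simp
  ring

theorem sum_doubleCenter_apply_left (j : α) : ∑ i, doubleCenter A i j = 0 := by
  have hN : (Fintype.card α : K) ≠ 0 := Nat.cast_ne_zero.mpr Fintype.card_ne_zero
  simp only [doubleCenter, Matrix.of_apply, Finset.sum_add_distrib, Finset.sum_sub_distrib,
    ← Finset.mul_sum, Finset.sum_const, Finset.card_univ, nsmul_eq_mul]
  field_simp
  ring

end DoubleCenter

section Gram

variable {ι κ m n R : Type*} [Fintype ι] [Fintype m] [Fintype n] [CommSemiring R]

theorem Matrix.trace_transpose_mul_eq_sum (A B : Matrix m n R) :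
    trace (Aᵀ * B) = ∑ i, ∑ j, A i j * B i j := by
  simp only [Matrix.trace, Matrix.diag, Matrix.mul_apply, Matrix.transpose_apply]
  exact Finset.sum_comm

theorem Matrix.trace_transpose_mul_sum_smul (C : Matrix κ ι R) (X : ι → Matrix m n R)
    (h l : κ) :
    trace ((∑ a, C h a • X a)ᵀ * ∑ b, C l b • X b)
      = (C * Matrix.of (fun a b => trace ((X a)ᵀ * X b)) * Cᵀ) h l := by
  simp only [Matrix.transpose_sum, Matrix.transpose_smul, Matrix.sum_mul, Matrix.mul_sum,
    Matrix.smul_mul, Matrix.mul_smul, Matrix.trace_sum, Matrix.trace_smul, smul_eq_mul,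
    Matrix.mul_apply, Matrix.of_apply, Matrix.transpose_apply, Finset.sum_mul, Finset.mul_sum]
  refine Finset.sum_congr rfl fun a _ => Finset.sum_congr rfl fun b _ => ?_
  ring

end Gram

section Pexp

variable {N : ℕ}

theorem pexp_sum_apply [NeZero N] (A : Matrix (Fin N) (Fin N) ℝ) :
    pexp (fun π => ∑ i, A i (π i)) = (N : ℝ)⁻¹ * ∑ i, ∑ j, A i j := by
  have hsum : (N : ℝ) * ∑ π : Perm (Fin N), ∑ i, A i (π i)
      = N.factorial * ∑ i, ∑ j, A i j := by
    rw [Finset.sum_comm, Finset.mul_sum, Finset.mul_sum]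
    refine Finset.sum_congr rfl fun i _ => ?_
    simpa using card_mul_sum_perm_apply (A i) i
  have hN : (N : ℝ) ≠ 0 := NeZero.ne _
  unfold pexp
  field_simp
  linear_combination hsum

theorem pexp_sub_mul_sub (f g : Perm (Fin N) → ℝ) :
    pexp (fun π => (f π - pexp f) * (g π - pexp g))
      = pexp (fun π => f π * g π) - pexp f * pexp g := by
  simp only [pexp, sub_mul, mul_sub, Finset.sum_sub_distrib, ← Finset.sum_mul,
    ← Finset.mul_sum, Finset.sum_const, Finset.card_univ, Fintype.card_perm, Fintype.card_fin,
    nsmul_eq_mul]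
  field_simp
  ring

theorem card_sub_one_mul_pexp_sum_apply_mul_sum_apply [NeZero N]
    (A B : Matrix (Fin N) (Fin N) ℝ) (hrow : ∀ i, ∑ j, B i j = 0)
    (hcol : ∀ j, ∑ i, B i j = 0) :
    ((N : ℝ) - 1) * pexp (fun π => (∑ i, A i (π i)) * (∑ i, B i (π i)))
      = trace (Aᵀ * B) := by
  have h := card_mul_card_sub_one_mul_sum_perm_mul_sum_perm A B hrow hcol
  simp only [Fintype.card_fin] at h
  have hN : (N : ℝ) ≠ 0 := NeZero.ne _
  rw [Matrix.trace_transpose_mul_eq_sum, pexp, mul_div_assoc', div_eq_iff (by positivity)]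
  exact mul_left_cancel₀ hN (by linear_combination h)

theorem sum_apply_sub_pexp [NeZero N] (A : Matrix (Fin N) (Fin N) ℝ) (π : Perm (Fin N)) :
    ∑ i, A i (π i) - pexp (fun π' => ∑ i, A i (π' i)) = ∑ i, doubleCenter A i (π i) := by
  rw [pexp_sum_apply, sum_doubleCenter_apply_perm, Fintype.card_fin]

theorem trace_transpose_doubleCenter_mul_doubleCenter [NeZero N]
    (A B : Matrix (Fin N) (Fin N) ℝ) :
    trace ((doubleCenter A)ᵀ * doubleCenter B)
      = ((N : ℝ) - 1) * (pexp (fun π => (∑ i, A i (π i)) * (∑ i, B i (π i)))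
          - pexp (fun π => ∑ i, A i (π i)) * pexp (fun π => ∑ i, B i (π i))) := by
  rw [← pexp_sub_mul_sub, ← card_sub_one_mul_pexp_sum_apply_mul_sum_apply _ _
    (sum_doubleCenter_apply_right B) (sum_doubleCenter_apply_left B)]
  simp only [sum_apply_sub_pexp]

end Pexp

section InvSqrt

open scoped ComplexOrder

variable {n 𝕜 : Type*} [Fintype n] [DecidableEq n] [RCLike 𝕜]

theorem Matrix.PosDef.inv_sqrt_mul_mul_inv_sqrt {V : Matrix n n 𝕜} (hV : V.PosDef) :
    (CFC.sqrt V)⁻¹ * V * (CFC.sqrt V)⁻¹ = 1 := by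
  have hW : IsUnit (CFC.sqrt V).det := (Matrix.isUnit_iff_isUnit_det _).mp
    ((CFC.isUnit_sqrt_iff V hV.posSemidef.nonneg).mpr hV.isUnit)
  calc (CFC.sqrt V)⁻¹ * V * (CFC.sqrt V)⁻¹
      = (CFC.sqrt V)⁻¹ * (CFC.sqrt V * CFC.sqrt V) * (CFC.sqrt V)⁻¹ := by
        rw [CFC.sqrt_mul_sqrt_self V hV.posSemidef.nonneg]
    _ = 1 := by
        rw [← Matrix.mul_assoc, Matrix.nonsing_inv_mul _ hW, Matrix.one_mul,
          Matrix.mul_nonsing_inv _ hW]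

end InvSqrt

section RealInvSqrt

variable {n : Type*} [Fintype n] [DecidableEq n]

theorem Matrix.transpose_inv_sqrt (V : Matrix n n ℝ) : ((CFC.sqrt V)⁻¹)ᵀ = (CFC.sqrt V)⁻¹ := by
  rw [← Matrix.conjTranspose_eq_transpose_of_trivial]
  exact (Matrix.nonneg_iff_posSemidef.mp (CFC.sqrt_nonneg V)).isHermitian.inv.eq

theorem Matrix.PosDef.trace_transpose_mul_inv_sqrt_smul_sum {ι m : Type*} [Fintype ι]
    [Fintype m] {V : Matrix n n ℝ} (hV : V.PosDef) (X : n → Matrix ι m ℝ) {c : ℝ}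
    (hX : Matrix.of (fun a b => trace ((X a)ᵀ * X b)) = c • V) (h l : n) :
    trace ((∑ a, (CFC.sqrt V)⁻¹ h a • X a)ᵀ * ∑ b, (CFC.sqrt V)⁻¹ l b • X b)
      = c * (1 : Matrix n n ℝ) h l := by
  rw [Matrix.trace_transpose_mul_sum_smul, hX, Matrix.mul_smul, Matrix.smul_mul,
    Matrix.transpose_inv_sqrt, hV.inv_sqrt_mul_mul_inv_sqrt]
  rfl

end RealInvSqrt

section LamMin

variable {n : Type*} [Fintype n] {V : Matrix n n ℝ}

theorem lamMin_mul_sum_sq_le (hV : V.PosSemidef) (x : n → ℝ) :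
    lamMin V * ∑ i, x i ^ 2 ≤ x ⬝ᵥ V *ᵥ x := by
  have hnonneg : ∀ y : n → ℝ, 0 ≤ y ⬝ᵥ V *ᵥ y := fun y => by
    simpa using hV.dotProduct_mulVec_nonneg y
  set s := ∑ i, x i ^ 2
  rcases (show 0 ≤ s from Finset.sum_nonneg fun i _ => sq_nonneg (x i)).eq_or_lt with hs | hs
  · rw [← hs, mul_zero]
    exact hnonneg x
  set y := (√s)⁻¹ • x
  have hy : ∑ i, y i ^ 2 = 1 := by
    simp only [y, Pi.smul_apply, smul_eq_mul, mul_pow, ← Finset.mul_sum, inv_pow,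
      Real.sq_sqrt hs.le]
    exact inv_mul_cancel₀ hs.ne'
  have hyV : y ⬝ᵥ V *ᵥ y = s⁻¹ * (x ⬝ᵥ V *ᵥ x) := by
    simp only [y, Matrix.mulVec_smul, dotProduct_smul, smul_dotProduct, smul_eq_mul,
      ← mul_assoc, ← mul_inv, Real.mul_self_sqrt hs.le]
  have hle : lamMin V ≤ y ⬝ᵥ V *ᵥ y :=
    ciInf_le ⟨0, Set.forall_mem_range.mpr fun z : {z : n → ℝ // ∑ i, z i ^ 2 = 1} =>
      hnonneg z.1⟩ ⟨y, hy⟩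
  rw [hyV, le_inv_mul_iff₀ hs] at hle
  linarith

theorem lamMin_pos [Nonempty n] (hV : V.PosDef) : 0 < lamMin V := by
  set S := {x : n → ℝ | ∑ i, x i ^ 2 = 1}
  have hS : IsCompact S := by
    refine (isCompact_closedBall (0 : n → ℝ) 1).of_isClosed_subset
      (isClosed_eq (by fun_prop) continuous_const) fun x hx => ?_
    rw [mem_closedBall_zero_iff, pi_norm_le_iff_of_nonneg zero_le_one]
    intro i
    rw [Real.norm_eq_abs, ← sq_le_one_iff_abs_le_one]
    exact hx ▸ Finset.single_le_sum (fun j _ => sq_nonneg (x j)) (Finset.mem_univ i)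
  have hcont : Continuous fun x : n → ℝ => x ⬝ᵥ V *ᵥ x := by
    simp only [dotProduct, Matrix.mulVec]
    fun_prop
  obtain ⟨x₀, hx₀, hmin⟩ := hS.exists_isMinOn
    ⟨Pi.single (Classical.arbitrary n) 1, by simp [S, Pi.single_apply]⟩ hcont.continuousOn
  have hx₀ne : x₀ ≠ 0 := by
    rintro rfl
    simp [S] at hx₀
  have : Nonempty {x : n → ℝ // ∑ i, x i ^ 2 = 1} := ⟨⟨x₀, hx₀⟩⟩
  calc 0 < x₀ ⬝ᵥ V *ᵥ x₀ := by simpa using hV.dotProduct_mulVec_pos hx₀ne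
    _ ≤ lamMin V := le_ciInf fun y => hmin y.2

theorem sum_sq_inv_sqrt_apply_le [DecidableEq n] [Nonempty n] (hV : V.PosDef) (h : n) :
    ∑ l, (CFC.sqrt V)⁻¹ h l ^ 2 ≤ (lamMin V)⁻¹ := by
  set Vi := (CFC.sqrt V)⁻¹
  have hquad : Vi h ⬝ᵥ V *ᵥ Vi h = 1 :=
    calc Vi h ⬝ᵥ V *ᵥ Vi h = (Vi * V * Viᵀ) h h := by
          rw [Matrix.mul_apply', Matrix.dotProduct_mulVec]
          rfl
      _ = 1 := by
          rw [Matrix.transpose_inv_sqrt, hV.inv_sqrt_mul_mul_inv_sqrt, Matrix.one_apply_eq]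
  have hle := lamMin_mul_sum_sq_le hV.posSemidef (Vi h)
  rw [hquad] at hle
  rw [← one_div, le_div_iff₀ (lamMin_pos hV)]
  linarith

theorem abs_sum_mul_le_sqrt_card_mul (v x : n → ℝ) {K : ℝ} (hx : ∀ l, |x l| ≤ K) :
    |∑ l, v l * x l| ≤ √(Fintype.card n) * √(∑ l, v l ^ 2) * K := by
  rcases isEmpty_or_nonempty n with hn | ⟨⟨l₀⟩⟩
  · simp
  have hK : 0 ≤ K := (abs_nonneg _).trans (hx l₀)
  calc |∑ l, v l * x l| ≤ ∑ l, |v l| * K := by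
        refine (Finset.abs_sum_le_sum_abs _ _).trans (Finset.sum_le_sum fun l _ => ?_)
        rw [abs_mul]
        exact mul_le_mul_of_nonneg_left (hx l) (abs_nonneg _)
    _ = (∑ l, 1 * |v l|) * K := by simp [Finset.sum_mul]
    _ ≤ √(Fintype.card n) * √(∑ l, v l ^ 2) * K := by
        gcongr
        simpa using Real.sum_mul_le_sqrt_mul_sqrt Finset.univ (fun _ => (1 : ℝ)) (fun l => |v l|)

theorem abs_sum_inv_sqrt_apply_mul_le [DecidableEq n] (hV : V.PosDef) (h : n) (x : n → ℝ)
    {K : ℝ} (hx : ∀ l, |x l| ≤ K) :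
    |∑ l, (CFC.sqrt V)⁻¹ h l * x l| ≤ (√(lamMin V))⁻¹ * √(Fintype.card n) * K := by
  have : Nonempty n := ⟨h⟩
  have hK : 0 ≤ K := (abs_nonneg _).trans (hx h)
  have hrow : √(∑ l, (CFC.sqrt V)⁻¹ h l ^ 2) ≤ (√(lamMin V))⁻¹ := by
    rw [← Real.sqrt_inv]
    exact Real.sqrt_le_sqrt (sum_sq_inv_sqrt_apply_le hV h)
  calc _ ≤ √(Fintype.card n) * √(∑ l, (CFC.sqrt V)⁻¹ h l ^ 2) * K :=
        abs_sum_mul_le_sqrt_card_mul _ _ hx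
    _ ≤ √(Fintype.card n) * (√(lamMin V))⁻¹ * K := by gcongr
    _ = (√(lamMin V))⁻¹ * √(Fintype.card n) * K := by ring

end LamMin

theorem stmt1_general (N H : ℕ) (hN : 2 ≤ N)
    (M M' M'' : Fin H → Matrix (Fin N) (Fin N) ℝ)
    (V : Matrix (Fin H) (Fin H) ℝ)
    (hV : ∀ h l, V h l =
      pexp (fun π => (∑ i, M h i (π i)) * (∑ i, M l i (π i)))
        - pexp (fun π => ∑ i, M h i (π i)) * pexp (fun π => ∑ i, M l i (π i)))
    (hpd : V.PosDef)
    (hM' : ∀ h i j, M' h i j =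
      M h i j - (N : ℝ)⁻¹ * (∑ j', M h i j') - (N : ℝ)⁻¹ * (∑ i', M h i' j)
        + ((N : ℝ) ^ 2)⁻¹ * (∑ i', ∑ j', M h i' j'))
    (hM'' : ∀ h i j, M'' h i j = ∑ l, (CFC.sqrt V)⁻¹ h l * M' l i j) :
    ((∀ h i, (∑ j, M'' h i j) = 0) ∧
     (∀ h j, (∑ i, M'' h i j) = 0) ∧
     (∀ h, Matrix.trace ((M'' h)ᵀ * M'' h) = (N : ℝ) - 1) ∧
     (∀ h l, h ≠ l → Matrix.trace ((M'' h)ᵀ * M'' l) = 0) ∧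
     (∀ π : Equiv.Perm (Fin N), ∀ h : Fin H,
       ((CFC.sqrt V)⁻¹).mulVec
           (fun l => (∑ i, M l i (π i)) - pexp (fun π' => ∑ i, M l i (π' i))) h
         = ∑ i, M'' h i (π i))) ∧
    (∀ h i j, |M'' h i j| ≤
      (Real.sqrt (lamMin V))⁻¹ * Real.sqrt (H : ℝ) *
        ⨆ l : Fin H, ⨆ i' : Fin N, ⨆ j' : Fin N, |M' l i' j'|) := by
  have : NeZero N := ⟨by omega⟩
  have hM'_eq : ∀ h, M' h = doubleCenter (M h) := fun h => by
    ext i j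
    simp [hM', doubleCenter]
  have hM''_eq : ∀ h, M'' h = ∑ l, (CFC.sqrt V)⁻¹ h l • M' l := fun h => by
    ext i j
    simp [hM'', Matrix.sum_apply]
  have hgram : Matrix.of (fun a b => trace ((M' a)ᵀ * M' b)) = ((N : ℝ) - 1) • V := by
    ext a b
    rw [Matrix.of_apply, hM'_eq, hM'_eq, trace_transpose_doubleCenter_mul_doubleCenter,
      Matrix.smul_apply, smul_eq_mul, hV]
  have htrace (h l) : trace ((M'' h)ᵀ * M'' l) = ((N : ℝ) - 1) * (1 : Matrix _ _ ℝ) h l := by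
    rw [hM''_eq, hM''_eq, hpd.trace_transpose_mul_inv_sqrt_smul_sum _ hgram]
  refine ⟨⟨fun h i => ?_, fun h j => ?_, fun h => ?_, fun h l hhl => ?_, fun π h => ?_⟩,
    fun h i j => ?_⟩
  · simp only [hM'', hM'_eq]
    rw [Finset.sum_comm]
    simp [← Finset.mul_sum, sum_doubleCenter_apply_right]
  · simp only [hM'', hM'_eq]
    rw [Finset.sum_comm]
    simp [← Finset.mul_sum, sum_doubleCenter_apply_left]
  · rw [htrace, Matrix.one_apply_eq, mul_one]
  · rw [htrace, Matrix.one_apply_ne hhl, mul_zero]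
  · simp only [Matrix.mulVec, dotProduct, sum_apply_sub_pexp, ← hM'_eq, hM'', Finset.mul_sum]
    exact Finset.sum_comm
  · have hK (l) : |M' l i j| ≤ ⨆ l : Fin H, ⨆ i' : Fin N, ⨆ j' : Fin N, |M' l i' j'| :=
      le_ciSup_of_le (Set.finite_range _).bddAbove l <|
        le_ciSup_of_le (Set.finite_range _).bddAbove i <|
          le_ciSup_of_le (Set.finite_range _).bddAbove j le_rfl
    rw [hM'']
    simpa only [Fintype.card_fin] using abs_sum_inv_sqrt_apply_mul_le hpd h _ hK

/-- Reformulation of multivariate linear permutational statistics in standardized,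
orthogonal form. -/
theorem stmt1 (N H : ℕ) (hN : 2 ≤ N) (hH : 1 ≤ H)
    (M M' M'' : Fin H → Matrix (Fin N) (Fin N) ℝ)
    (V : Matrix (Fin H) (Fin H) ℝ)
    (hV : ∀ h l, V h l =
      pexp (fun π => (∑ i, M h i (π i)) * (∑ i, M l i (π i)))
        - pexp (fun π => ∑ i, M h i (π i)) * pexp (fun π => ∑ i, M l i (π i)))
    (hpd : V.PosDef)
    (hM' : ∀ h i j, M' h i j =
      M h i j - (N : ℝ)⁻¹ * (∑ j', M h i j') - (N : ℝ)⁻¹ * (∑ i', M h i' j)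
        + ((N : ℝ) ^ 2)⁻¹ * (∑ i', ∑ j', M h i' j'))
    (hM'' : ∀ h i j, M'' h i j = ∑ l, (CFC.sqrt V)⁻¹ h l * M' l i j) :
    ((∀ h i, (∑ j, M'' h i j) = 0) ∧
     (∀ h j, (∑ i, M'' h i j) = 0) ∧
     (∀ h, Matrix.trace ((M'' h)ᵀ * M'' h) = (N : ℝ) - 1) ∧
     (∀ h l, h ≠ l → Matrix.trace ((M'' h)ᵀ * M'' l) = 0) ∧
     (∀ π : Equiv.Perm (Fin N), ∀ h : Fin H,
       ((CFC.sqrt V)⁻¹).mulVec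
           (fun l => (∑ i, M l i (π i)) - pexp (fun π' => ∑ i, M l i (π' i))) h
         = ∑ i, M'' h i (π i))) ∧
    (∀ h i j, |M'' h i j| ≤
      (Real.sqrt (lamMin V))⁻¹ * Real.sqrt (H : ℝ) *
        ⨆ l : Fin H, ⨆ i' : Fin N, ⨆ j' : Fin N, |M' l i' j'|) :=
  stmt1_general N H hN M M' M'' V hV hpd hM' hM''
end
end

section
/- There exists an absolute constant C > 0 such that the following holds for every N ≥ 2. Let π be a uniformly random permutation of {1,…,N}, and let A = (a_{ij}), B = (b_{ij}), D = (d_{ij}) be real N×N matrices each of whose row sums and column sums are all zero, with |a_{ij}| ≤ α, |b_{ij}| ≤ β, |d_{ij}| ≤ δ for all i,j. Then: (i) for any real N×N matrix M with |M(i,j)| ≤ B₀ for all i,j, Var(∑_{i=1}^N M(i,π(i))) ≤ C N B₀²; (ii) Var(∑_{i≠j} a_{iπ(i)} b_{jπ(j)}) ≤ C N² α² β²; (iii) Var(∑_{i≠j} a_{iπ(j)} b_{jπ(i)}) ≤ C N² α² β²; (iv) Var(∑_{i≠j} a_{iπ(i)} b_{jπ(j)} d_{iπ(j)}) ≤ C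 N³ α² β² δ²; (v) Var(∑_{i≠j} a_{iπ(i)} b_{jπ(i)} d_{iπ(j)}) ≤ C N³ α² β² δ². -/
/-!
Everything rests on an exchange identity for a uniformly random permutation `π`. If `G π` depends
only on the values of `π` on a set `T`, `i ∉ T` and `∑ v, F v = 0`, then replacing `π` by
`π * swap i u` for `u ∉ T` shows `E[F (π i) G] = E[F (π u) G]`; averaging over `u ∉ T` gives
`(N - #T) E[F (π i) G] = -∑ t ∈ T, E[F (π t) G]`. So a factor with zero row sums, evaluated at a
point that no other factor sees, gains a factor `1/N`, and using the identity twice gains `1/N²`.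

Expanding each variance into a sum over quadruples `(i, j, k, l)`, the `N⁴` quadruples of distinct
indices gain `1/N²` in (ii), (iii) and `1/N` in (iv), (v); in (ii), (iii) the `O(N³)` quadruples
with `{i, j} ≠ {k, l}` still contain an index seen by a single factor and gain `1/N`; the remaining
`O(N²)` terms are bounded trivially. For (i), subtracting the row means shifts the statistic by a
constant and makes all rows sum to zero.
-/

open Finset Matrix
open scoped Classical

noncomputable section

/-- Variance with respect to the uniform distribution on permutations of `{1,…,N}`. -/
def pvar {N : ℕ} (f : Equiv.Perm (Fin N) → ℝ) : ℝ :=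
  pexp (fun π => (f π - pexp f) ^ 2)

open Equiv
open scoped Nat

theorem card_compl_mul_sum_perm_eq {α R : Type*} [Fintype α] [DecidableEq α] [CommRing R]
    (T : Finset α) {i : α} (hi : i ∉ T) (F : α → R) (hF : ∑ v, F v = 0) (G : Perm α → R)
    (hG : ∀ π σ : Perm α, (∀ t ∈ T, π t = σ t) → G π = G σ) :
    (#Tᶜ : R) * ∑ π, F (π i) * G π = -∑ π, (∑ t ∈ T, F (π t)) * G π := by
  have exchange : ∀ u ∉ T, ∑ π, F (π u) * G π = ∑ π, F (π i) * G π := fun u hu =>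
    Fintype.sum_equiv (Equiv.mulRight (swap i u)) _ _ fun π => by
      have hfix : ∀ t ∈ T, π t = (π * swap i u) t := fun t ht => by
        rw [Perm.mul_apply, swap_apply_of_ne_of_ne (ne_of_mem_of_not_mem ht hi)
          (ne_of_mem_of_not_mem ht hu)]
      simp [hG _ _ hfix]
  have hrow : ∀ π : Perm α, ∑ u ∈ Tᶜ, F (π u) = -∑ t ∈ T, F (π t) := fun π => by
    rw [eq_neg_iff_add_eq_zero, sum_compl_add_sum, Equiv.sum_comp π F, hF]
  calc (#Tᶜ : R) * ∑ π, F (π i) * G π = ∑ u ∈ Tᶜ, ∑ π, F (π u) * G π := by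
        rw [sum_congr rfl fun u hu => exchange u (mem_compl.mp hu), sum_const, nsmul_eq_mul]
    _ = -∑ π, (∑ t ∈ T, F (π t)) * G π := by
        simp_rw [sum_comm (s := Tᶜ), ← sum_mul, hrow, neg_mul, sum_neg_distrib]

lemma abs_mul_le_of_abs_le {x y a b : ℝ} (hx : |x| ≤ a) (hy : |y| ≤ b) : |x * y| ≤ a * b :=
  (abs_mul x y).trans_le <| mul_le_mul hx hy (abs_nonneg y) ((abs_nonneg x).trans hx)

section Expectation

variable {N : ℕ}

lemma pexp_sum {ι : Type*} (s : Finset ι) (f : ι → Perm (Fin N) → ℝ) :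
    pexp (fun π => ∑ x ∈ s, f x π) = ∑ x ∈ s, pexp (f x) := by
  simp only [pexp, sum_comm (s := univ), sum_div]

lemma abs_pexp_le {f : Perm (Fin N) → ℝ} {b : ℝ} (hf : ∀ π, |f π| ≤ b) : |pexp f| ≤ b := by
  have hfac : (0 : ℝ) < N ! := by exact_mod_cast N.factorial_pos
  rw [pexp, abs_div, abs_of_pos hfac, div_le_iff₀ hfac]
  calc |∑ π, f π| ≤ ∑ π, |f π| := abs_sum_le_sum_abs _ _
    _ ≤ ∑ _π : Perm (Fin N), b := sum_le_sum fun π _ => hf π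
    _ = b * N ! := by simp [Fintype.card_perm, mul_comm]

lemma pexp_sub_sq_eq (f : Perm (Fin N) → ℝ) (a : ℝ) :
    pexp (fun π => (f π - a) ^ 2) = pvar f + (pexp f - a) ^ 2 := by
  have hfac : (N ! : ℝ) ≠ 0 := by positivity
  rw [pvar]
  set m := pexp f
  have hsum : ∑ π, f π = N ! * m := by simp only [m, pexp]; field_simp
  have hexpand : ∀ π, (f π - a) ^ 2 = (f π - m) ^ 2 + 2 * (m - a) * f π + (a ^ 2 - m ^ 2) :=
    fun π => by ring
  simp only [pexp, hexpand, sum_add_distrib, ← mul_sum, hsum, sum_const, card_univ,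
    Fintype.card_perm, Fintype.card_fin, nsmul_eq_mul]
  field_simp
  ring

lemma pvar_le_pexp_sub_sq (f : Perm (Fin N) → ℝ) (a : ℝ) :
    pvar f ≤ pexp (fun π => (f π - a) ^ 2) := by
  rw [pexp_sub_sq_eq]
  exact le_add_of_nonneg_right (sq_nonneg _)

end Expectation

section Exchange

variable {N : ℕ}

lemma abs_pexp_mul_le_of_notMem (T : Finset (Fin N)) {i : Fin N} (hi : i ∉ T) {F : Fin N → ℝ}
    (hF : ∑ v, F v = 0) (G : Perm (Fin N) → ℝ)
    (hG : ∀ π σ : Perm (Fin N), (∀ t ∈ T, π t = σ t) → G π = G σ) {b : ℝ}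
    (hb : ∀ t ∈ T, |pexp (fun π => F (π t) * G π)| ≤ b) :
    |pexp (fun π => F (π i) * G π)| ≤ (#T + 1) * #T * b / N := by
  set p := pexp (fun π => F (π i) * G π)
  have hexchange : (#Tᶜ : ℝ) * p = -∑ t ∈ T, pexp (fun π => F (π t) * G π) := by
    rw [← pexp_sum]
    simp only [p, pexp, mul_div_assoc', card_compl_mul_sum_perm_eq T hi F hF G hG, neg_div,
      sum_mul]
  have hcompl : (#Tᶜ : ℝ) * |p| ≤ #T * b := by
    rw [← abs_of_nonneg (Nat.cast_nonneg (α := ℝ) #Tᶜ), ← abs_mul, hexchange, abs_neg]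
    refine (abs_sum_le_sum_abs _ _).trans ?_
    exact (sum_le_card_nsmul T _ b hb).trans_eq (nsmul_eq_mul _ _)
  have hN : (N : ℝ) = #Tᶜ + #T := by
    exact_mod_cast ((card_compl_add_card T).trans (Fintype.card_fin N)).symm
  have hone : (1 : ℝ) ≤ #Tᶜ := by
    exact_mod_cast card_pos.mpr ⟨i, mem_compl.mpr hi⟩
  have hNpos : (0 : ℝ) < N := by linarith [(Nat.cast_nonneg (α := ℝ) #T)]
  rw [le_div_iff₀ hNpos]
  calc |p| * N ≤ (#T + 1) * (#Tᶜ * |p|) := by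
        rw [hN]
        nlinarith [mul_nonneg (mul_nonneg (Nat.cast_nonneg (α := ℝ) #T) (sub_nonneg.2 hone))
          (abs_nonneg p)]
    _ ≤ (#T + 1) * (#T * b) := by gcongr
    _ = (#T + 1) * #T * b := by ring

lemma abs_pexp_le_of_three {i t₁ t₂ t₃ : Fin N} (h₁ : t₁ ≠ i) (h₂ : t₂ ≠ i) (h₃ : t₃ ≠ i)
    {F : Fin N → ℝ} (hF : ∑ v, F v = 0) (G : Fin N → Fin N → Fin N → ℝ)
    {f : Perm (Fin N) → ℝ} (hf : ∀ π, f π = F (π i) * G (π t₁) (π t₂) (π t₃)) {b : ℝ}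
    (hb₁ : |pexp (fun π => F (π t₁) * G (π t₁) (π t₂) (π t₃))| ≤ b)
    (hb₂ : |pexp (fun π => F (π t₂) * G (π t₁) (π t₂) (π t₃))| ≤ b)
    (hb₃ : |pexp (fun π => F (π t₃) * G (π t₁) (π t₂) (π t₃))| ≤ b) :
    |pexp f| ≤ 12 * b / N := by
  obtain rfl : f = _ := funext hf
  have hi : i ∉ ({t₁, t₂, t₃} : Finset (Fin N)) := by simp [h₁.symm, h₂.symm, h₃.symm]
  have hbound := abs_pexp_mul_le_of_notMem {t₁, t₂, t₃} hi hF (fun π => G (π t₁) (π t₂) (π t₃))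
    (fun π σ h => by simp [h t₁ (by simp), h t₂ (by simp), h t₃ (by simp)])
    (b := b) (by simp only [mem_insert, mem_singleton]; rintro t (rfl | rfl | rfl) <;> assumption)
  have hcard : (#({t₁, t₂, t₃} : Finset (Fin N)) : ℝ) ≤ 3 := by exact_mod_cast card_le_three
  have hb : 0 ≤ b := (abs_nonneg _).trans hb₁
  refine hbound.trans (div_le_div_of_nonneg_right ?_ (Nat.cast_nonneg N))
  gcongr
  nlinarith

lemma abs_pexp_le_of_three_of_abs_le {i t₁ t₂ t₃ : Fin N} (h₁ : t₁ ≠ i) (h₂ : t₂ ≠ i)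
    (h₃ : t₃ ≠ i) {F : Fin N → ℝ} (hF : ∑ v, F v = 0) (G : Fin N → Fin N → Fin N → ℝ)
    {f : Perm (Fin N) → ℝ} (hf : ∀ π, f π = F (π i) * G (π t₁) (π t₂) (π t₃)) {c g : ℝ}
    (hc : ∀ v, |F v| ≤ c) (hg : ∀ a b d, |G a b d| ≤ g) :
    |pexp f| ≤ 12 * (c * g) / N :=
  have hb : ∀ t, |pexp (fun π => F (π t) * G (π t₁) (π t₂) (π t₃))| ≤ c * g := fun _ =>
    abs_pexp_le fun _ => abs_mul_le_of_abs_le (hc _) (hg _ _ _)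
  abs_pexp_le_of_three h₁ h₂ h₃ hF G hf (hb t₁) (hb t₂) (hb t₃)

end Exchange

section Counting

variable {N : ℕ}

lemma sum_pair_le (S : Fin N → Fin N → ℝ) {K₁ K₂ : ℝ} (hK₂ : 0 ≤ K₂)
    (h₁ : ∀ i, S i i ≤ K₁) (h₂ : ∀ i k, i ≠ k → S i k ≤ K₂) :
    ∑ i, ∑ k, S i k ≤ N ^ 2 * K₂ + N * K₁ := by
  have hpoint : ∀ i k, S i k ≤ K₂ + if i = k then K₁ else 0 := fun i k => by
    by_cases hik : i = k
    · subst hik; simp only [if_true]; linarith [h₁ i]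
    · simp only [hik, if_false, add_zero]; exact h₂ i k hik
  calc ∑ i, ∑ k, S i k ≤ ∑ i : Fin N, ∑ k : Fin N, (K₂ + if i = k then K₁ else 0) :=
        sum_le_sum fun i _ => sum_le_sum fun k _ => hpoint i k
    _ = N ^ 2 * K₂ + N * K₁ := by simp [sum_add_distrib]; ring

lemma sum_quadruple_le (S : Fin N → Fin N → Fin N → Fin N → ℝ) {K₂ K₃ K₄ : ℝ}
    (hK₂ : 0 ≤ K₂) (hK₃ : 0 ≤ K₃) (hK₄ : 0 ≤ K₄)
    (h₀ : ∀ i j k l, i = j ∨ k = l → S i j k l = 0)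
    (h₂ : ∀ i j k l, S i j k l ≤ K₂)
    (h₃ : ∀ i j k l, i ≠ j → k ≠ l → ¬(i = k ∧ j = l) → ¬(i = l ∧ j = k) → S i j k l ≤ K₃)
    (h₄ : ∀ i j k l, i ≠ j → k ≠ l → i ≠ k → i ≠ l → j ≠ k → j ≠ l → S i j k l ≤ K₄) :
    ∑ i, ∑ j, ∑ k, ∑ l, S i j k l ≤ N ^ 4 * K₄ + 4 * N ^ 3 * K₃ + 2 * N ^ 2 * K₂ := by
  have hpoint : ∀ i j k l, S i j k l ≤ K₄
      + ((if i = k then K₃ else 0) + (if i = l then K₃ else 0) + (if j = k then K₃ else 0)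
        + (if j = l then K₃ else 0))
      + ((if i = k ∧ j = l then K₂ else 0) + (if i = l ∧ j = k then K₂ else 0)) := by
    intro i j k l
    have ite₃ : ∀ (p : Prop) [Decidable p], 0 ≤ if p then K₃ else 0 := fun _ _ =>
      ite_nonneg hK₃ le_rfl
    have ite₂ : ∀ (p : Prop) [Decidable p], 0 ≤ if p then K₂ else 0 := fun _ _ =>
      ite_nonneg hK₂ le_rfl
    have := ite₃ (i = k); have := ite₃ (i = l); have := ite₃ (j = k); have := ite₃ (j = l)
    have := ite₂ (i = k ∧ j = l); have := ite₂ (i = l ∧ j = k)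
    by_cases hdiag : i = j ∨ k = l
    · rw [h₀ i j k l hdiag]; linarith
    obtain ⟨hij, hkl⟩ := not_or.mp hdiag
    by_cases hA : i = k ∧ j = l
    · rw [if_pos hA]; linarith [h₂ i j k l]
    by_cases hB : i = l ∧ j = k
    · rw [if_pos hB]; linarith [h₂ i j k l]
    by_cases hik : i = k
    · rw [if_pos hik]; linarith [h₃ i j k l hij hkl hA hB]
    by_cases hil : i = l
    · rw [if_pos hil]; linarith [h₃ i j k l hij hkl hA hB]
    by_cases hjk : j = k
    · rw [if_pos hjk]; linarith [h₃ i j k l hij hkl hA hB]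
    by_cases hjl : j = l
    · rw [if_pos hjl]; linarith [h₃ i j k l hij hkl hA hB]
    linarith [h₄ i j k l hij hkl hik hil hjk hjl]
  refine (sum_le_sum fun i _ => sum_le_sum fun j _ => sum_le_sum fun k _ =>
    sum_le_sum fun l _ => hpoint i j k l).trans_eq ?_
  simp [sum_add_distrib, ite_and]
  ring

end Counting

section Variance

variable {N : ℕ}

lemma pexp_sq_sum (e : Fin N → Perm (Fin N) → ℝ) :
    pexp (fun π => (∑ i, e i π) ^ 2) = ∑ i, ∑ k, pexp (fun π => e i π * e k π) := by
  simp only [sq, sum_mul_sum, pexp_sum]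

lemma pexp_sq_sum_sum (e : Fin N → Fin N → Perm (Fin N) → ℝ) :
    pexp (fun π => (∑ i, ∑ j, e i j π) ^ 2)
      = ∑ i, ∑ j, ∑ k, ∑ l, pexp (fun π => e i j π * e k l π) := by
  simp only [sq, sum_mul_sum, pexp_sum]
  exact sum_congr rfl fun i _ => sum_comm

lemma pvar_sum_ne_le (P : Fin N → Fin N → Perm (Fin N) → ℝ) {E K₃ K₄ : ℝ}
    (hK₃ : 0 ≤ K₃) (hK₄ : 0 ≤ K₄) (hP : ∀ i j π, |P i j π| ≤ E)
    (h₃ : ∀ i j k l, i ≠ j → k ≠ l → ¬(i = k ∧ j = l) → ¬(i = l ∧ j = k) →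
      |pexp (fun π => P i j π * P k l π)| ≤ K₃)
    (h₄ : ∀ i j k l, i ≠ j → k ≠ l → i ≠ k → i ≠ l → j ≠ k → j ≠ l →
      |pexp (fun π => P i j π * P k l π)| ≤ K₄) :
    pvar (fun π => ∑ i, ∑ j, if i ≠ j then P i j π else 0)
      ≤ N ^ 4 * K₄ + 4 * N ^ 3 * K₃ + 2 * N ^ 2 * E ^ 2 := by
  have hE : ∀ i j π, |if i ≠ j then P i j π else 0| ≤ E := fun i j π => by
    split_ifs
    · exact hP i j π
    · simpa using (abs_nonneg _).trans (hP i j π)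
  refine (pvar_le_pexp_sub_sq _ 0).trans ?_
  simp only [sub_zero, pexp_sq_sum_sum]
  refine sum_quadruple_le _ (sq_nonneg E) hK₃ hK₄ ?_ ?_ ?_ ?_
  · rintro i j k l (rfl | rfl) <;> simp [pexp]
  · intro i j k l
    exact (le_abs_self _).trans <| abs_pexp_le fun π =>
      (abs_mul_le_of_abs_le (hE i j π) (hE k l π)).trans_eq (sq E).symm
  · intro i j k l hij hkl hA hB
    simpa only [if_pos hij, if_pos hkl] using (le_abs_self _).trans (h₃ i j k l hij hkl hA hB)
  · intro i j k l hij hkl hik hil hjk hjl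
    simpa only [if_pos hij, if_pos hkl] using
      (le_abs_self _).trans (h₄ i j k l hij hkl hik hil hjk hjl)

lemma pvar_sum_apply_le (M : Matrix (Fin N) (Fin N) ℝ) {B₀ : ℝ} (hM : ∀ i j, |M i j| ≤ B₀) :
    pvar (fun π => ∑ i, M i (π i)) ≤ 52 * N * B₀ ^ 2 := by
  set r : Fin N → ℝ := fun i => (∑ j, M i j) / N
  have hr : ∀ i, |r i| ≤ B₀ := fun i => by
    have hN : (0 : ℝ) < N := by exact_mod_cast i.pos
    rw [abs_div, Nat.abs_cast, div_le_iff₀ hN]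
    refine (abs_sum_le_sum_abs _ _).trans ((sum_le_sum fun j _ => hM i j).trans_eq ?_)
    simp [mul_comm]
  have hrow : ∀ i, ∑ j, (M i j - r i) = 0 := fun i => by
    have hN : (N : ℝ) ≠ 0 := by exact_mod_cast i.pos.ne'
    simp [r, sum_sub_distrib, mul_div_cancel₀ _ hN]
  have hbound : ∀ i j, |M i j - r i| ≤ 2 * B₀ := fun i j =>
    (abs_sub _ _).trans (by linarith [hM i j, hr i])
  refine (pvar_le_pexp_sub_sq _ (∑ i, r i)).trans ?_
  simp only [← sum_sub_distrib, pexp_sq_sum]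
  have hK₂ : 0 ≤ 12 * (2 * B₀ * (2 * B₀)) / N := by
    have := mul_self_nonneg (2 * B₀); positivity
  refine (sum_pair_le _ (K₁ := (2 * B₀) ^ 2) hK₂ (fun i => ?_) (fun i k hik => ?_)).trans_eq ?_
  · exact (le_abs_self _).trans <| abs_pexp_le fun π =>
      (abs_mul_le_of_abs_le (hbound _ _) (hbound _ _)).trans_eq (sq _).symm
  · exact (le_abs_self _).trans <| abs_pexp_le_of_three_of_abs_le hik.symm hik.symm hik.symm
      (hrow i) (fun a _ _ => M k a - r k) (fun π => rfl) (hbound i) (fun a _ _ => hbound k a)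
  · rcases eq_or_ne (N : ℝ) 0 with hN | hN
    · simp [hN]
    · field_simp; ring

end Variance

section Bilinear

variable {N : ℕ} {A B : Matrix (Fin N) (Fin N) ℝ} {α β : ℝ}

lemma abs_pexp_mul_le_of_ne (hA : ∀ i, ∑ j, A i j = 0) (hB : ∀ i, ∑ j, B i j = 0)
    (hAb : ∀ i j, |A i j| ≤ α) (hBb : ∀ i j, |B i j| ≤ β) {i j k l : Fin N} (hij : i ≠ j)
    (hkl : k ≠ l) (hikjl : ¬(i = k ∧ j = l)) (hiljk : ¬(i = l ∧ j = k)) :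
    |pexp (fun π => A i (π i) * B j (π j) * (A k (π k) * B l (π l)))|
      ≤ 12 * (α ^ 2 * β ^ 2) / N := by
  by_cases hlj : l = j
  · subst hlj
    have hik : i ≠ k := fun h => hikjl ⟨h, rfl⟩
    refine (abs_pexp_le_of_three_of_abs_le hij.symm hik.symm hik.symm (hA i)
      (fun a b _ => B l a * A k b * B l a) (fun π => by ring) (hAb i) fun a b _ =>
        abs_mul_le_of_abs_le (abs_mul_le_of_abs_le (hBb l a) (hAb k b)) (hBb l a)).trans_eq
      (by ring)
  by_cases hli : l = i
  · subst hli
    have hjk : j ≠ k := fun h => hiljk ⟨rfl, h⟩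
    refine (abs_pexp_le_of_three_of_abs_le hij hjk.symm hjk.symm (hB j)
      (fun a b _ => A l a * A k b * B l a) (fun π => by ring) (hBb j) fun a b _ =>
        abs_mul_le_of_abs_le (abs_mul_le_of_abs_le (hAb l a) (hAb k b)) (hBb l a)).trans_eq
      (by ring)
  refine (abs_pexp_le_of_three_of_abs_le (Ne.symm hli) (Ne.symm hlj) hkl (hB l)
    (fun a b d => A i a * B j b * A k d) (fun π => by ring) (hBb l) fun a b d =>
      abs_mul_le_of_abs_le (abs_mul_le_of_abs_le (hAb i a) (hBb j b)) (hAb k d)).trans_eq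
    (by ring)

lemma abs_pexp_mul_le_of_pairwise_ne (hA : ∀ i, ∑ j, A i j = 0) (hB : ∀ i, ∑ j, B i j = 0)
    (hAb : ∀ i j, |A i j| ≤ α) (hBb : ∀ i j, |B i j| ≤ β) {i j k l : Fin N} (hij : i ≠ j)
    (hkl : k ≠ l) (hik : i ≠ k) (hil : i ≠ l) (hjk : j ≠ k) (hjl : j ≠ l) :
    |pexp (fun π => A i (π i) * B j (π j) * (A k (π k) * B l (π l)))|
      ≤ 144 * (α ^ 2 * β ^ 2) / N ^ 2 := by
  refine (abs_pexp_le_of_three hij.symm hik.symm hil.symm (hA i)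
    (fun a b d => B j a * (A k b * B l d)) (fun π => by ring) (b := 12 * (α ^ 2 * β ^ 2) / N)
    ?_ ?_ ?_).trans_eq (by ring)
  · exact (abs_pexp_le_of_three_of_abs_le hjl hkl hkl (hB l)
      (fun a b _ => A i a * B j a * A k b) (fun π => by ring) (hBb l) fun a b _ =>
        abs_mul_le_of_abs_le (abs_mul_le_of_abs_le (hAb i a) (hBb j a)) (hAb k b)).trans_eq
      (by ring)
  · exact (abs_pexp_le_of_three_of_abs_le hkl hjl hjl (hB l)
      (fun a b _ => A i a * A k a * B j b) (fun π => by ring) (hBb l) fun a b _ =>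
        abs_mul_le_of_abs_le (abs_mul_le_of_abs_le (hAb i a) (hAb k a)) (hBb j b)).trans_eq
      (by ring)
  · exact (abs_pexp_le_of_three_of_abs_le hjl.symm hjk.symm hjk.symm (hB j)
      (fun a b _ => A i a * B l a * A k b) (fun π => by ring) (hBb j) fun a b _ =>
        abs_mul_le_of_abs_le (abs_mul_le_of_abs_le (hAb i a) (hBb l a)) (hAb k b)).trans_eq
      (by ring)


lemma abs_pexp_mul_swap_le_of_ne (hA : ∀ i, ∑ j, A i j = 0) (hB : ∀ i, ∑ j, B i j = 0)
    (hAb : ∀ i j, |A i j| ≤ α) (hBb : ∀ i j, |B i j| ≤ β) {i j k l : Fin N} (hij : i ≠ j)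
    (hkl : k ≠ l) (hikjl : ¬(i = k ∧ j = l)) (hiljk : ¬(i = l ∧ j = k)) :
    |pexp (fun π => A i (π j) * B j (π i) * (A k (π l) * B l (π k)))|
      ≤ 12 * (α ^ 2 * β ^ 2) / N := by
  by_cases hlj : l = j
  · subst hlj
    have hik : i ≠ k := fun h => hikjl ⟨h, rfl⟩
    refine (abs_pexp_le_of_three_of_abs_le hij.symm hik.symm hik.symm (hB l)
      (fun a b _ => A i a * A k a * B l b) (fun π => by ring) (hBb l) fun a b _ =>
        abs_mul_le_of_abs_le (abs_mul_le_of_abs_le (hAb i a) (hAb k a)) (hBb l b)).trans_eq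
      (by ring)
  by_cases hli : l = i
  · subst hli
    have hjk : j ≠ k := fun h => hiljk ⟨rfl, h⟩
    refine (abs_pexp_le_of_three_of_abs_le hij hjk.symm hjk.symm (hA l)
      (fun a b _ => B j a * A k a * B l b) (fun π => by ring) (hAb l) fun a b _ =>
        abs_mul_le_of_abs_le (abs_mul_le_of_abs_le (hBb j a) (hAb k a)) (hBb l b)).trans_eq
      (by ring)
  refine (abs_pexp_le_of_three_of_abs_le (Ne.symm hli) (Ne.symm hlj) hkl (hA k)
    (fun a b d => B j a * A i b * B l d) (fun π => by ring) (hAb k) fun a b d =>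
      abs_mul_le_of_abs_le (abs_mul_le_of_abs_le (hBb j a) (hAb i b)) (hBb l d)).trans_eq
    (by ring)

lemma abs_pexp_mul_swap_le_of_pairwise_ne (hA : ∀ i, ∑ j, A i j = 0)
    (hB : ∀ i, ∑ j, B i j = 0) (hAb : ∀ i j, |A i j| ≤ α) (hBb : ∀ i j, |B i j| ≤ β)
    {i j k l : Fin N} (hij : i ≠ j) (hkl : k ≠ l) (hik : i ≠ k) (hil : i ≠ l) (hjk : j ≠ k)
    (hjl : j ≠ l) :
    |pexp (fun π => A i (π j) * B j (π i) * (A k (π l) * B l (π k)))|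
      ≤ 144 * (α ^ 2 * β ^ 2) / N ^ 2 := by
  refine (abs_pexp_le_of_three hij hjk.symm hjl.symm (hA i)
    (fun a b d => B j a * (A k d * B l b)) (fun π => by ring) (b := 12 * (α ^ 2 * β ^ 2) / N)
    ?_ ?_ ?_).trans_eq (by ring)
  · exact (abs_pexp_le_of_three_of_abs_le hik hkl.symm hkl.symm (hB l)
      (fun a b _ => A i a * B j a * A k b) (fun π => by ring) (hBb l) fun a b _ =>
        abs_mul_le_of_abs_le (abs_mul_le_of_abs_le (hAb i a) (hBb j a)) (hAb k b)).trans_eq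
      (by ring)
  · exact (abs_pexp_le_of_three_of_abs_le hik.symm hil.symm hil.symm (hB j)
      (fun a b _ => A i a * B l a * A k b) (fun π => by ring) (hBb j) fun a b _ =>
        abs_mul_le_of_abs_le (abs_mul_le_of_abs_le (hAb i a) (hBb l a)) (hAb k b)).trans_eq
      (by ring)
  · exact (abs_pexp_le_of_three_of_abs_le hil.symm hik.symm hik.symm (hB j)
      (fun a b _ => A i a * A k a * B l b) (fun π => by ring) (hBb j) fun a b _ =>
        abs_mul_le_of_abs_le (abs_mul_le_of_abs_le (hAb i a) (hAb k a)) (hBb l b)).trans_eq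
      (by ring)

lemma bilinear_bound_le (N : ℕ) (α β : ℝ) :
    (N : ℝ) ^ 4 * (144 * (α ^ 2 * β ^ 2) / N ^ 2) + 4 * (N : ℝ) ^ 3 * (12 * (α ^ 2 * β ^ 2) / N)
      + 2 * (N : ℝ) ^ 2 * (α * β) ^ 2 ≤ 200 * (N : ℝ) ^ 2 * α ^ 2 * β ^ 2 := by
  rcases eq_or_ne (N : ℝ) 0 with hN | hN
  · simp [hN]
  · field_simp
    nlinarith [sq_nonneg (N * α * β)]

lemma pvar_sum_ne_mul_le (hA : ∀ i, ∑ j, A i j = 0) (hB : ∀ i, ∑ j, B i j = 0)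
    (hAb : ∀ i j, |A i j| ≤ α) (hBb : ∀ i j, |B i j| ≤ β) :
    pvar (fun π => ∑ i, ∑ j, if i ≠ j then A i (π i) * B j (π j) else 0)
      ≤ 200 * (N : ℝ) ^ 2 * α ^ 2 * β ^ 2 := by
  exact (pvar_sum_ne_le (fun i j π => A i (π i) * B j (π j)) (by positivity) (by positivity)
    (fun i j π => abs_mul_le_of_abs_le (hAb _ _) (hBb _ _))
    (fun i j k l hij hkl => abs_pexp_mul_le_of_ne hA hB hAb hBb hij hkl)
    (fun i j k l => abs_pexp_mul_le_of_pairwise_ne hA hB hAb hBb)).trans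
    (bilinear_bound_le N α β)

lemma pvar_sum_ne_mul_swap_le (hA : ∀ i, ∑ j, A i j = 0) (hB : ∀ i, ∑ j, B i j = 0)
    (hAb : ∀ i j, |A i j| ≤ α) (hBb : ∀ i j, |B i j| ≤ β) :
    pvar (fun π => ∑ i, ∑ j, if i ≠ j then A i (π j) * B j (π i) else 0)
      ≤ 200 * (N : ℝ) ^ 2 * α ^ 2 * β ^ 2 := by
  exact (pvar_sum_ne_le (fun i j π => A i (π j) * B j (π i)) (by positivity) (by positivity)
    (fun i j π => abs_mul_le_of_abs_le (hAb _ _) (hBb _ _))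
    (fun i j k l hij hkl => abs_pexp_mul_swap_le_of_ne hA hB hAb hBb hij hkl)
    (fun i j k l => abs_pexp_mul_swap_le_of_pairwise_ne hA hB hAb hBb)).trans
    (bilinear_bound_le N α β)

end Bilinear

section Trilinear

variable {N : ℕ} {A B D : Matrix (Fin N) (Fin N) ℝ} {α β δ : ℝ}

lemma abs_pexp_mul_mul_le (hA : ∀ i, ∑ j, A i j = 0) (hAb : ∀ i j, |A i j| ≤ α)
    (hBb : ∀ i j, |B i j| ≤ β) (hDb : ∀ i j, |D i j| ≤ δ) {i j k l : Fin N} (hij : i ≠ j)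
    (hik : i ≠ k) (hil : i ≠ l) :
    |pexp (fun π => A i (π i) * B j (π j) * D i (π j) * (A k (π k) * B l (π l) * D k (π l)))|
      ≤ 12 * (α ^ 2 * β ^ 2 * δ ^ 2) / N :=
  (abs_pexp_le_of_three_of_abs_le hij.symm hik.symm hil.symm (hA i)
    (fun a b d => B j a * D i a * (A k b * B l d * D k d)) (fun π => by ring) (hAb i)
    fun a b d => abs_mul_le_of_abs_le (abs_mul_le_of_abs_le (hBb j a) (hDb i a))
      (abs_mul_le_of_abs_le (abs_mul_le_of_abs_le (hAb k b) (hBb l d)) (hDb k d))).trans_eq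
    (by ring)

lemma abs_pexp_mul_mul_swap_le (hD : ∀ i, ∑ j, D i j = 0) (hAb : ∀ i j, |A i j| ≤ α)
    (hBb : ∀ i j, |B i j| ≤ β) (hDb : ∀ i j, |D i j| ≤ δ) {i j k l : Fin N} (hij : i ≠ j)
    (hjk : j ≠ k) (hjl : j ≠ l) :
    |pexp (fun π => A i (π i) * B j (π i) * D i (π j) * (A k (π k) * B l (π k) * D k (π l)))|
      ≤ 12 * (α ^ 2 * β ^ 2 * δ ^ 2) / N :=
  (abs_pexp_le_of_three_of_abs_le hij hjk.symm hjl.symm (hD i)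
    (fun a b d => A i a * B j a * (A k b * B l b * D k d)) (fun π => by ring) (hDb i)
    fun a b d => abs_mul_le_of_abs_le (abs_mul_le_of_abs_le (hAb i a) (hBb j a))
      (abs_mul_le_of_abs_le (abs_mul_le_of_abs_le (hAb k b) (hBb l b)) (hDb k d))).trans_eq
    (by ring)

lemma trilinear_bound_le (N : ℕ) (α β δ : ℝ) :
    (N : ℝ) ^ 4 * (12 * (α ^ 2 * β ^ 2 * δ ^ 2) / N) + 4 * (N : ℝ) ^ 3 * (α * β * δ) ^ 2
      + 2 * (N : ℝ) ^ 2 * (α * β * δ) ^ 2 ≤ 200 * (N : ℝ) ^ 3 * α ^ 2 * β ^ 2 * δ ^ 2 := by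
  rcases Nat.eq_zero_or_pos N with rfl | hN
  · simp
  · have hN' : (1 : ℝ) ≤ N := by exact_mod_cast hN
    field_simp
    nlinarith [sq_nonneg (α * β * δ), mul_nonneg (sub_nonneg.2 hN') (sq_nonneg (α * β * δ))]

lemma pvar_sum_ne_mul_mul_le (hA : ∀ i, ∑ j, A i j = 0) (hAb : ∀ i j, |A i j| ≤ α)
    (hBb : ∀ i j, |B i j| ≤ β) (hDb : ∀ i j, |D i j| ≤ δ) :
    pvar (fun π => ∑ i, ∑ j, if i ≠ j then A i (π i) * B j (π j) * D i (π j) else 0)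
      ≤ 200 * (N : ℝ) ^ 3 * α ^ 2 * β ^ 2 * δ ^ 2 := by
  have hP : ∀ i j (π : Perm (Fin N)), |A i (π i) * B j (π j) * D i (π j)| ≤ α * β * δ :=
    fun i j π => abs_mul_le_of_abs_le (abs_mul_le_of_abs_le (hAb _ _) (hBb _ _)) (hDb _ _)
  exact (pvar_sum_ne_le _ (sq_nonneg _) (by positivity) hP
    (fun i j k l _ _ _ _ => abs_pexp_le fun π =>
      (abs_mul_le_of_abs_le (hP i j π) (hP k l π)).trans_eq (sq _).symm)
    (fun i j k l hij _ hik hil _ _ => abs_pexp_mul_mul_le hA hAb hBb hDb hij hik hil)).trans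
    (trilinear_bound_le N α β δ)

lemma pvar_sum_ne_mul_mul_swap_le (hD : ∀ i, ∑ j, D i j = 0) (hAb : ∀ i j, |A i j| ≤ α)
    (hBb : ∀ i j, |B i j| ≤ β) (hDb : ∀ i j, |D i j| ≤ δ) :
    pvar (fun π => ∑ i, ∑ j, if i ≠ j then A i (π i) * B j (π i) * D i (π j) else 0)
      ≤ 200 * (N : ℝ) ^ 3 * α ^ 2 * β ^ 2 * δ ^ 2 := by
  have hP : ∀ i j (π : Perm (Fin N)), |A i (π i) * B j (π i) * D i (π j)| ≤ α * β * δ :=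
    fun i j π => abs_mul_le_of_abs_le (abs_mul_le_of_abs_le (hAb _ _) (hBb _ _)) (hDb _ _)
  exact (pvar_sum_ne_le _ (sq_nonneg _) (by positivity) hP
    (fun i j k l _ _ _ _ => abs_pexp_le fun π =>
      (abs_mul_le_of_abs_le (hP i j π) (hP k l π)).trans_eq (sq _).symm)
    (fun i j k l hij _ _ _ hjk hjl => abs_pexp_mul_mul_swap_le hD hAb hBb hDb hij hjk hjl)).trans
    (trilinear_bound_le N α β δ)

end Trilinear

/-- Variance bounds for several (bi)linear permutational statistics. -/
theorem stmt4 : ∃ C : ℝ, 0 < C ∧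
    ∀ (N : ℕ), 2 ≤ N →
    ∀ (A B D : Matrix (Fin N) (Fin N) ℝ) (α β δ : ℝ),
    (∀ i, (∑ j, A i j) = 0) → (∀ j, (∑ i, A i j) = 0) →
    (∀ i, (∑ j, B i j) = 0) → (∀ j, (∑ i, B i j) = 0) →
    (∀ i, (∑ j, D i j) = 0) → (∀ j, (∑ i, D i j) = 0) →
    (∀ i j, |A i j| ≤ α) → (∀ i j, |B i j| ≤ β) → (∀ i j, |D i j| ≤ δ) →
    ((∀ (M : Matrix (Fin N) (Fin N) ℝ) (B₀ : ℝ), (∀ i j, |M i j| ≤ B₀) →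
        pvar (fun π => ∑ i, M i (π i)) ≤ C * (N : ℝ) * B₀ ^ 2) ∧
      pvar (fun π => ∑ i, ∑ j, if i ≠ j then A i (π i) * B j (π j) else 0)
        ≤ C * (N : ℝ) ^ 2 * α ^ 2 * β ^ 2 ∧
      pvar (fun π => ∑ i, ∑ j, if i ≠ j then A i (π j) * B j (π i) else 0)
        ≤ C * (N : ℝ) ^ 2 * α ^ 2 * β ^ 2 ∧
      pvar (fun π => ∑ i, ∑ j, if i ≠ j then A i (π i) * B j (π j) * D i (π j) else 0)
        ≤ C * (N : ℝ) ^ 3 * α ^ 2 * β ^ 2 * δ ^ 2 ∧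
      pvar (fun π => ∑ i, ∑ j, if i ≠ j then A i (π i) * B j (π i) * D i (π j) else 0)
        ≤ C * (N : ℝ) ^ 3 * α ^ 2 * β ^ 2 * δ ^ 2) := by
  refine ⟨200, by norm_num, fun N _ A B D α β δ hA _ hB _ hD _ hAb hBb hDb =>
    ⟨fun M B₀ hM => ?_, pvar_sum_ne_mul_le hA hB hAb hBb, pvar_sum_ne_mul_swap_le hA hB hAb hBb,
      pvar_sum_ne_mul_mul_le hA hAb hBb hDb, pvar_sum_ne_mul_mul_swap_le hD hAb hBb hDb⟩⟩
  have hnonneg : (0 : ℝ) ≤ N * B₀ ^ 2 := by positivity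
  linarith [pvar_sum_apply_le M hM]
end
end

section
/- In the complete-randomization setting, assume S(q,q) > 0 and N_q < N for every q, and let V*_Ŷ be the correlation matrix of V_Ŷ, i.e., V*_Ŷ(q,q') = V_Ŷ(q,q') / √(V_Ŷ(q,q) V_Ŷ(q',q')). Suppose max_q N_q ≤ (1−c)N for some 0 < c < 1, and suppose λ_min(V*_Ŷ) > 0 and λ_max(V*_Ŷ) ≤ σ² λ_min(V*_Ŷ) for some σ ≥ 1 (i.e., the condition number of V*_Ŷ is at most σ²). Then Fᵀ diag(N_q^{-1} S(q,q))_{q=1}^Q F ⪯ (σ²/c) · Fᵀ V_Ŷ F in the Loewner order; in particular Condition 1 holds with σ_F² = σ²/c. -/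
open Finset Matrix MeasureTheory ProbabilityTheory
open scoped Classical

noncomputable section

/-- Probability with respect to the uniform distribution on permutations of `{1,…,N}`. -/
def pprob {N : ℕ} (p : Equiv.Perm (Fin N) → Prop) : ℝ :=
  pexp (fun π => if p π then (1 : ℝ) else 0)

/-- Mean potential outcome `Ȳ(q)`. -/
def Ybar {N Q : ℕ} (Y : Fin N → Fin Q → ℝ) (q : Fin Q) : ℝ :=
  (∑ i, Y i q) / (N : ℝ)

/-- Finite-population covariance `S(q,q')`. -/
def Svar {N Q : ℕ} (Y : Fin N → Fin Q → ℝ) (q q' : Fin Q) : ℝ :=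
  (∑ i, (Y i q - Ybar Y q) * (Y i q' - Ybar Y q')) / ((N : ℝ) - 1)

/-- Maximum absolute deviation `M_N(q)`. -/
def MNdev {N Q : ℕ} (Y : Fin N → Fin Q → ℝ) (q : Fin Q) : ℝ :=
  ⨆ i : Fin N, |Y i q - Ybar Y q|

/-- Sample mean `Ŷ_q` in arm `q` under the assignment `Z_i = z(π(i))`. -/
def Yhat {N Q : ℕ} (Y : Fin N → Fin Q → ℝ) (z : Fin N → Fin Q) (Nq : Fin Q → ℕ)
    (π : Equiv.Perm (Fin N)) (q : Fin Q) : ℝ :=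
  (∑ i, if z (π i) = q then Y i q else 0) / (Nq q : ℝ)

/-- The covariance matrix `V_Ŷ = diag(N_q⁻¹ S(q,q)) − N⁻¹ S`. -/
def VYmat {N Q : ℕ} (Y : Fin N → Fin Q → ℝ) (Nq : Fin Q → ℕ) :
    Matrix (Fin Q) (Fin Q) ℝ :=
  Matrix.of fun q q' =>
    (if q = q' then Svar Y q q / (Nq q : ℝ) else 0) - Svar Y q q' / (N : ℝ)

/-- Largest eigenvalue of a (symmetric) matrix, via the Rayleigh quotient. -/
def lamMax {n : Type*} [Fintype n] (A : Matrix n n ℝ) : ℝ :=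
  ⨆ x : {x : n → ℝ // (∑ i, x i ^ 2) = 1}, x.1 ⬝ᵥ A.mulVec x.1

/-- Standard normal cumulative distribution function. -/
def stdNormalCDF (t : ℝ) : ℝ :=
  ∫ x in Set.Iic t, (Real.sqrt (2 * Real.pi))⁻¹ * Real.exp (-(x ^ 2) / 2)

/-- The standard Gaussian measure on `ℝ^H`. -/
def gaussianPi (H : ℕ) : Measure (Fin H → ℝ) :=
  Measure.pi fun _ : Fin H => gaussianReal 0 1

/-- Condition 1 with parameter `σF`:
`Fᵀ diag(N_q⁻¹ S(q,q)) F ⪯ σF² Fᵀ V_Ŷ F` in the Loewner order. -/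
def CondOne {N Q H : ℕ} (Y : Fin N → Fin Q → ℝ) (Nq : Fin Q → ℕ)
    (F : Matrix (Fin Q) (Fin H) ℝ) (σF : ℝ) : Prop :=
  (σF ^ 2 • (Fᵀ * VYmat Y Nq * F) -
    Fᵀ * Matrix.diagonal (fun q => Svar Y q q / (Nq q : ℝ)) * F).PosSemidef

/-- Condition 2 (proper contrast) with parameters `c, c'`. -/
def CondTwo {Q H : ℕ} (F : Matrix (Fin Q) (Fin H) ℝ) (c c' : ℝ) : Prop :=
  (∀ q h, |F q h| ≤ c / (Q : ℝ)) ∧ c' / (Q : ℝ) ≤ lamMin (Fᵀ * F)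

/-- The positive semidefinite square root of a positive semidefinite matrix (as in the
older Mathlib, where this definition was provided). -/
def Matrix.PosSemidef.sqrt {n : Type*} [Fintype n] [DecidableEq n]
    {A : Matrix n n ℝ} (hA : A.PosSemidef) : Matrix n n ℝ :=
  hA.isHermitian.eigenvectorUnitary.1 * diagonal (Real.sqrt ∘ hA.isHermitian.eigenvalues) *
    (star hA.isHermitian.eigenvectorUnitary : Matrix n n ℝ)

/-- The standardized estimator `γ̃ = V_γ̂^{-1/2}(γ̂ − γ)`. -/
def tgam {N Q H : ℕ} (Y : Fin N → Fin Q → ℝ) (z : Fin N → Fin Q) (Nq : Fin Q → ℕ)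
    (F : Matrix (Fin Q) (Fin H) ℝ) (hpd : (Fᵀ * VYmat Y Nq * F).PosDef)
    (π : Equiv.Perm (Fin N)) : Fin H → ℝ :=
  ((hpd.posSemidef.sqrt)⁻¹).mulVec (Fᵀ.mulVec (Yhat Y z Nq π) - Fᵀ.mulVec (Ybar Y))

/-! Write `V_Ŷ = R V* R` with `R = diag(√V_Ŷ(q,q))`. Since `V*(q,q) = 1`, we get
`1 ≤ λ_max(V*) ≤ σ² λ_min(V*)`, hence `R² ⪯ σ² R V* R`, i.e. `diag(V_Ŷ) ⪯ σ² V_Ŷ`.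
On the other hand `N_q ≤ (1 - c) N` gives `V_Ŷ(q,q) = S(q,q) (1/N_q - 1/N) ≥ c S(q,q)/N_q`.
Chaining the two bounds and conjugating by `F` gives the claim. -/

namespace Matrix

variable {n : Type*} [Fintype n]

lemma abs_dotProduct_mulVec_le_of_sum_sq_eq_one (A : Matrix n n ℝ) {x : n → ℝ}
    (hx : ∑ i, x i ^ 2 = 1) : |x ⬝ᵥ A *ᵥ x| ≤ ∑ i, ∑ j, |A i j| := by
  have hx_le : ∀ i, |x i| ≤ 1 := fun i => by
    rw [← sq_le_one_iff_abs_le_one, ← hx]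
    exact single_le_sum (f := fun j => x j ^ 2) (fun j _ => sq_nonneg _) (mem_univ i)
  have hterm : ∀ i j, |x i * (A i j * x j)| ≤ |A i j| := fun i j => by
    rw [abs_mul, abs_mul, ← mul_assoc, mul_comm |x i|, mul_assoc]
    exact mul_le_of_le_one_right (abs_nonneg _)
      (mul_le_one₀ (hx_le i) (abs_nonneg _) (hx_le j))
  calc |x ⬝ᵥ A *ᵥ x| = |∑ i, ∑ j, x i * (A i j * x j)| := by
        simp only [dotProduct, mulVec, mul_sum]
    _ ≤ ∑ i, ∑ j, |x i * (A i j * x j)| :=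
        (abs_sum_le_sum_abs _ _).trans (sum_le_sum fun i _ => abs_sum_le_sum_abs _ _)
    _ ≤ ∑ i, ∑ j, |A i j| := sum_le_sum fun i _ => sum_le_sum fun j _ => hterm i j

lemma bddBelow_rayleigh (A : Matrix n n ℝ) :
    BddBelow (Set.range fun x : {x : n → ℝ // ∑ i, x i ^ 2 = 1} => x.1 ⬝ᵥ A *ᵥ x.1) := by
  refine ⟨-∑ i, ∑ j, |A i j|, ?_⟩
  rintro _ ⟨x, rfl⟩
  exact neg_le_of_abs_le (abs_dotProduct_mulVec_le_of_sum_sq_eq_one A x.2)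

lemma bddAbove_rayleigh (A : Matrix n n ℝ) :
    BddAbove (Set.range fun x : {x : n → ℝ // ∑ i, x i ^ 2 = 1} => x.1 ⬝ᵥ A *ᵥ x.1) := by
  refine ⟨∑ i, ∑ j, |A i j|, ?_⟩
  rintro _ ⟨x, rfl⟩
  exact le_of_abs_le (abs_dotProduct_mulVec_le_of_sum_sq_eq_one A x.2)

lemma apply_self_le_lamMax [DecidableEq n] (A : Matrix n n ℝ) (i : n) : A i i ≤ lamMax A := by
  have hunit : ∑ j, (Pi.single i 1 : n → ℝ) j ^ 2 = 1 := by
    simp [Pi.single_apply]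
  have := le_ciSup (bddAbove_rayleigh A) ⟨Pi.single i 1, hunit⟩
  simpa [lamMax, mulVec_single] using this

lemma lamMin_mul_sum_sq_le (A : Matrix n n ℝ) (w : n → ℝ) :
    lamMin A * ∑ i, w i ^ 2 ≤ w ⬝ᵥ A *ᵥ w := by
  obtain hs | hs := (sum_nonneg fun i _ => sq_nonneg (w i) : 0 ≤ ∑ i, w i ^ 2).eq_or_lt
  · have hw : w = 0 := funext fun i => pow_eq_zero_iff two_ne_zero |>.1 <|
      (sum_eq_zero_iff_of_nonneg fun j _ => sq_nonneg (w j)).1 hs.symm i (mem_univ i)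
    simp [hw]
  · have hsqrt : √(∑ i, w i ^ 2) * √(∑ i, w i ^ 2) = ∑ i, w i ^ 2 := Real.mul_self_sqrt hs.le
    set u := (√(∑ i, w i ^ 2))⁻¹ • w
    have hunit : ∑ i, u i ^ 2 = 1 := by
      simp only [u, Pi.smul_apply, smul_eq_mul, mul_pow, ← mul_sum, inv_pow, Real.sq_sqrt hs.le]
      exact inv_mul_cancel₀ hs.ne'
    have hquad : u ⬝ᵥ A *ᵥ u = (∑ i, w i ^ 2)⁻¹ * (w ⬝ᵥ A *ᵥ w) := by
      simp only [u, mulVec_smul, dotProduct_smul, smul_dotProduct, smul_eq_mul, ← mul_assoc,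
        ← mul_inv, hsqrt]
    rw [← le_div_iff₀ hs, div_eq_inv_mul, ← hquad]
    exact ciInf_le (bddBelow_rayleigh A) ⟨u, hunit⟩

variable [DecidableEq n]

lemma eq_diagonal_sqrt_mul_mul_diagonal_sqrt {A C : Matrix n n ℝ} (hdiag : ∀ i, 0 < A i i)
    (hC : ∀ i j, C i j = A i j / √(A i i * A j j)) :
    A = diagonal (fun i => √(A i i)) * C * diagonal (fun i => √(A i i)) := by
  ext i j
  have hi := Real.sqrt_pos.2 (hdiag i)
  have hj := Real.sqrt_pos.2 (hdiag j)
  rw [mul_diagonal, diagonal_mul, hC, Real.sqrt_mul (hdiag i).le]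
  field_simp

theorem posSemidef_smul_sub_diagonal_diag_of_lamMax_le {A C : Matrix n n ℝ} (hA : A.IsHermitian)
    (hdiag : ∀ i, 0 < A i i) (hC : ∀ i j, C i j = A i j / √(A i i * A j j)) {σ : ℝ}
    (hσ : lamMax C ≤ σ ^ 2 * lamMin C) : (σ ^ 2 • A - diagonal A.diag).PosSemidef := by
  have hone : ∀ i, 1 ≤ σ ^ 2 * lamMin C := fun i => by
    have hCii : C i i = 1 := by
      rw [hC, Real.sqrt_mul_self (hdiag i).le, div_self (hdiag i).ne']
    exact (hCii ▸ apply_self_le_lamMax C i).trans hσ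
  refine .of_dotProduct_mulVec_nonneg
    ((hA.smul (IsSelfAdjoint.all _)).sub (isHermitian_diagonal _)) fun x => ?_
  set r := fun i => √(A i i)
  set w := diagonal r *ᵥ x
  have hquad : x ⬝ᵥ A *ᵥ x = w ⬝ᵥ C *ᵥ w := by
    conv_lhs => rw [eq_diagonal_sqrt_mul_mul_diagonal_sqrt hdiag hC]
    have hxr : x ᵥ* diagonal r = w := funext fun i => by
      simp only [w, vecMul_diagonal, mulVec_diagonal, mul_comm]
    rw [← mulVec_mulVec, ← mulVec_mulVec, dotProduct_mulVec, hxr]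
  have hdiag_quad : x ⬝ᵥ diagonal A.diag *ᵥ x = ∑ i, w i ^ 2 := by
    refine sum_congr rfl fun i _ => ?_
    simp only [w, mulVec_diagonal, diag_apply, r, mul_pow, Real.sq_sqrt (hdiag i).le]
    ring
  have hw : ∑ i, w i ^ 2 ≤ σ ^ 2 * (w ⬝ᵥ C *ᵥ w) := calc
    ∑ i, w i ^ 2 ≤ ∑ i, σ ^ 2 * lamMin C * w i ^ 2 :=
        sum_le_sum fun i _ => le_mul_of_one_le_left (sq_nonneg _) (hone i)
    _ = σ ^ 2 * (lamMin C * ∑ i, w i ^ 2) := by rw [← mul_sum, mul_assoc]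
    _ ≤ σ ^ 2 * (w ⬝ᵥ C *ᵥ w) :=
        mul_le_mul_of_nonneg_left (lamMin_mul_sum_sq_le C w) (sq_nonneg σ)
  simp only [star_trivial, sub_mulVec, smul_mulVec, dotProduct_sub, dotProduct_smul,
    smul_eq_mul, hquad, hdiag_quad]
  linarith

end Matrix

lemma mul_div_le_div_sub_div {s m n c : ℝ} (hs : 0 ≤ s) (hm : 0 < m) (hn : 0 ≤ n)
    (hmn : m ≤ (1 - c) * n) : c * (s / m) ≤ s / m - s / n := by
  have hn' : 0 < n := hn.lt_of_ne (by rintro rfl; rw [mul_zero] at hmn; linarith)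
  calc c * (s / m) = s / m - s / m * (1 - c) := by ring
    _ ≤ s / m - s / m * (m / n) := by
        gcongr
        rwa [div_le_iff₀ hn']
    _ = s / m - s / n := by field_simp

lemma Svar_comm {N Q : ℕ} (Y : Fin N → Fin Q → ℝ) (q q' : Fin Q) :
    Svar Y q q' = Svar Y q' q := by
  simp only [Svar, mul_comm]

lemma VYmat_isHermitian {N Q : ℕ} (Y : Fin N → Fin Q → ℝ) (Nq : Fin Q → ℕ) :
    (VYmat Y Nq).IsHermitian := by
  ext q q'
  by_cases h : q = q'
  · subst h; rfl
  · simp [VYmat, h, Ne.symm h, Svar_comm Y q q']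

lemma VYmat_apply_self {N Q : ℕ} (Y : Fin N → Fin Q → ℝ) (Nq : Fin Q → ℕ) (q : Fin Q) :
    VYmat Y Nq q q = Svar Y q q / Nq q - Svar Y q q / N := by
  simp [VYmat]

theorem stmt9_general (N Q H : ℕ)
    (Nq : Fin Q → ℕ) (hNq : ∀ q, 1 ≤ Nq q)
    (Y : Fin N → Fin Q → ℝ) (F : Matrix (Fin Q) (Fin H) ℝ)
    (hS : ∀ q, 0 < Svar Y q q)
    (Vstar : Matrix (Fin Q) (Fin Q) ℝ)
    (hVstar : ∀ q q', Vstar q q' =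
      VYmat Y Nq q q' / Real.sqrt (VYmat Y Nq q q * VYmat Y Nq q' q'))
    (c : ℝ) (hc0 : 0 < c)
    (hmax : ∀ q, (Nq q : ℝ) ≤ (1 - c) * (N : ℝ))
    (σ : ℝ)
    (hcond : lamMax Vstar ≤ σ ^ 2 * lamMin Vstar) :
    ((σ ^ 2 / c) • (Fᵀ * VYmat Y Nq * F)
      - Fᵀ * Matrix.diagonal (fun q => Svar Y q q / (Nq q : ℝ)) * F).PosSemidef := by
  set d := fun q => Svar Y q q / (Nq q : ℝ)
  have hNq_pos : ∀ q, (0 : ℝ) < Nq q := fun q => by exact_mod_cast hNq q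
  have hcd : ∀ q, c * d q ≤ VYmat Y Nq q q := fun q => by
    rw [VYmat_apply_self]
    exact mul_div_le_div_sub_div (hS q).le (hNq_pos q) N.cast_nonneg (hmax q)
  have hdiag : ∀ q, 0 < VYmat Y Nq q q := fun q =>
    (mul_pos hc0 (div_pos (hS q) (hNq_pos q))).trans_le (hcd q)
  have hcorr :=
    posSemidef_smul_sub_diagonal_diag_of_lamMax_le (VYmat_isHermitian Y Nq) hdiag hVstar hcond
  have hgap : (diagonal (c⁻¹ • (VYmat Y Nq).diag - d)).PosSemidef :=
    .diagonal fun q => sub_nonneg.2 ((le_inv_mul_iff₀ hc0).2 (hcd q))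
  have hkey : ((σ ^ 2 / c) • VYmat Y Nq - diagonal d).PosSemidef := by
    convert (hcorr.smul (inv_nonneg.2 hc0.le)).add hgap using 1
    have hsplit : diagonal (c⁻¹ • (VYmat Y Nq).diag - d)
        = c⁻¹ • diagonal (VYmat Y Nq).diag - diagonal d := by
      rw [← diagonal_smul, diagonal_sub]
      rfl
    rw [hsplit]
    module
  simpa only [conjTranspose_eq_transpose_of_trivial, Matrix.mul_sub, Matrix.sub_mul,
    Matrix.mul_smul, Matrix.smul_mul] using hkey.conjTranspose_mul_mul_same F

/-- Lemma 2(ii): bounded arm sizes and bounded condition number of the correlation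
matrix of `V_Ŷ` imply Condition 1 with `σ_F² = σ²/c`. -/
theorem stmt9 (N Q H : ℕ) (hN : 2 ≤ N) (hQ : 1 ≤ Q)
    (Nq : Fin Q → ℕ) (hNq : ∀ q, 1 ≤ Nq q) (hsum : (∑ q, Nq q) = N)
    (Y : Fin N → Fin Q → ℝ) (F : Matrix (Fin Q) (Fin H) ℝ)
    (hS : ∀ q, 0 < Svar Y q q) (hNlt : ∀ q, Nq q < N)
    (Vstar : Matrix (Fin Q) (Fin Q) ℝ)
    (hVstar : ∀ q q', Vstar q q' =
      VYmat Y Nq q q' / Real.sqrt (VYmat Y Nq q q * VYmat Y Nq q' q'))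
    (c : ℝ) (hc0 : 0 < c) (hc1 : c < 1)
    (hmax : ∀ q, (Nq q : ℝ) ≤ (1 - c) * (N : ℝ))
    (σ : ℝ) (hσ : 1 ≤ σ)
    (hlmin : 0 < lamMin Vstar)
    (hcond : lamMax Vstar ≤ σ ^ 2 * lamMin Vstar) :
    ((σ ^ 2 / c) • (Fᵀ * VYmat Y Nq * F)
      - Fᵀ * Matrix.diagonal (fun q => Svar Y q q / (Nq q : ℝ)) * F).PosSemidef :=
  stmt9_general N Q H Nq hNq Y F hS Vstar hVstar c hc0 hmax σ hcond
end
end
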